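/- For every ε with 0 < ε < 1, every N ≥ 1, and every positive integer r, the number of positive integers n ≤ N with rad(n) = r is at most (2/ε)^(2^(1/ε)) · N^ε. -/

import Mathlib

/-- The radical of a positive integer: the product of its distinct prime factors. -/
def rad (n : ℕ) : ℕ := n.primeFactors.prod id

/-!
Rankin's trick: every `n ≤ N` satisfies `1 ≤ N ^ ε * n ^ (-ε)`, so the count is at most
`N ^ ε * ∑ n ^ (-ε)` over the `n` with `rad n = r`. These `n` are exactly the products
`∏_{p ∣ r} p ^ a_p` with every `a_p ≥ 1`, so the sum is at most the Euler product
`∏_{p ∣ r} (p ^ ε - 1)⁻¹`. Each factor is at most `2 / ε` because `p ^ ε - 1 ≥ 2 ^ ε - 1 ≥ ε / 2`,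
and at most `1` once `p ^ ε ≥ 2`, which fails for fewer than `2 ^ (1 / ε)` primes.
-/

open Finset Real

lemma primeFactors_rad (n : ℕ) : (rad n).primeFactors = n.primeFactors :=
  Nat.primeFactors_prod fun _ hp ↦ Nat.prime_of_mem_primeFactors hp

lemma card_le_rpow_mul_sum_inv_rpow {s : Finset ℕ} {N : ℕ} (hs : s ⊆ Icc 1 N) {ε : ℝ}
    (hε : 0 ≤ ε) : (#s : ℝ) ≤ (N : ℝ) ^ ε * ∑ n ∈ s, ((n : ℝ) ^ ε)⁻¹ := by
  rw [mul_sum, card_eq_sum_ones, Nat.cast_sum, Nat.cast_one]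
  refine sum_le_sum fun n hn ↦ ?_
  obtain ⟨hn1, hnN⟩ := mem_Icc.mp (hs hn)
  have hn : (0 : ℝ) < n := by exact_mod_cast hn1
  rw [← div_eq_mul_inv, one_le_div₀ (rpow_pos_of_pos hn ε)]
  exact rpow_le_rpow hn.le (by exact_mod_cast hnN) hε

lemma sum_Icc_inv_pow_le {y : ℝ} (hy : 1 < y) (K : ℕ) :
    ∑ a ∈ Icc 1 K, (y ^ a)⁻¹ ≤ (y - 1)⁻¹ := by
  calc ∑ a ∈ Icc 1 K, (y ^ a)⁻¹ = ∑ a ∈ Ico 1 (K + 1), y⁻¹ ^ a := by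
        simp only [inv_pow, Ico_add_one_right_eq_Icc]
    _ ≤ y⁻¹ ^ 1 / (1 - y⁻¹) := geom_sum_Ico_le_of_lt_one (by positivity) (inv_lt_one_of_one_lt₀ hy)
    _ = (y - 1)⁻¹ := by field_simp

lemma cast_prod_pow_rpow_inv {ι : Type*} (s : Finset ι) (b a : ι → ℕ) (ε : ℝ) :
    (((∏ i ∈ s, b i ^ a i : ℕ) : ℝ) ^ ε)⁻¹ = ∏ i ∈ s, (((b i : ℝ) ^ ε) ^ a i)⁻¹ := by
  push_cast
  rw [← finsetProd_rpow _ _ (fun _ _ ↦ by positivity), ← prod_inv_distrib]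
  simp only [rpow_pow_comm (Nat.cast_nonneg _)]

lemma sum_inv_rpow_le_prod_inv_rpow_sub_one {P s : Finset ℕ} (hP : ∀ p ∈ P, 1 < p)
    (hs : ∀ n ∈ s, n ≠ 0 ∧ n.primeFactors = P) {ε : ℝ} (hε : 0 < ε) :
    ∑ n ∈ s, ((n : ℝ) ^ ε)⁻¹ ≤ ∏ p ∈ P, ((p : ℝ) ^ ε - 1)⁻¹ := by
  classical
  let K := s.sup id
  let φ : (∀ p ∈ P, ℕ) → ℕ := fun e ↦ ∏ p ∈ P.attach, p.1 ^ e p.1 p.2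
  have hsurj : s ⊆ (P.pi fun _ ↦ Icc 1 K).image φ := by
    intro n hn
    obtain ⟨hn0, hnP⟩ := hs n hn
    refine mem_image.mpr ⟨fun p _ ↦ n.factorization p, mem_pi.mpr fun p hp ↦ mem_Icc.mpr ⟨?_, ?_⟩, ?_⟩
    · rw [← hnP, ← Nat.support_factorization] at hp
      exact Nat.one_le_iff_ne_zero.mpr (Finsupp.mem_support_iff.mp hp)
    · exact (Nat.factorization_lt p hn0).le.trans (le_sup (f := id) hn)
    · change ∏ p ∈ P.attach, p.1 ^ n.factorization p.1 = n
      rw [prod_attach P fun p ↦ p ^ n.factorization p, ← hnP]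
      exact (Nat.prod_primeFactors_pow_factorization hn0).symm
  calc ∑ n ∈ s, ((n : ℝ) ^ ε)⁻¹
      ≤ ∑ n ∈ (P.pi fun _ ↦ Icc 1 K).image φ, ((n : ℝ) ^ ε)⁻¹ :=
        sum_le_sum_of_subset_of_nonneg hsurj fun _ _ _ ↦ by positivity
    _ ≤ ∑ e ∈ P.pi fun _ ↦ Icc 1 K, ((φ e : ℝ) ^ ε)⁻¹ :=
        sum_image_le_of_nonneg fun _ _ ↦ by positivity
    _ = ∑ e ∈ P.pi fun _ ↦ Icc 1 K, ∏ p ∈ P.attach, (((p.1 : ℝ) ^ ε) ^ e p.1 p.2)⁻¹ :=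
        sum_congr rfl fun e _ ↦ cast_prod_pow_rpow_inv P.attach _ (fun p ↦ e p.1 p.2) ε
    _ = ∏ p ∈ P, ∑ a ∈ Icc 1 K, (((p : ℝ) ^ ε) ^ a)⁻¹ :=
        (prod_sum P (fun _ ↦ Icc 1 K) fun p a ↦ (((p : ℝ) ^ ε) ^ a)⁻¹).symm
    _ ≤ ∏ p ∈ P, ((p : ℝ) ^ ε - 1)⁻¹ := by
        refine prod_le_prod (fun _ _ ↦ by positivity) fun p hp ↦ sum_Icc_inv_pow_le ?_ K
        exact one_lt_rpow (by exact_mod_cast hP p hp) hε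

lemma one_add_div_two_le_two_rpow {ε : ℝ} (hε : 0 ≤ ε) : 1 + ε / 2 ≤ (2 : ℝ) ^ ε := by
  have hlog : 1 / 2 < log 2 := by linarith [log_two_gt_d9]
  calc 1 + ε / 2 ≤ log 2 * ε + 1 := by nlinarith
    _ ≤ exp (log 2 * ε) := add_one_le_exp _
    _ = (2 : ℝ) ^ ε := (rpow_def_of_pos two_pos ε).symm

lemma inv_rpow_sub_one_le_two_div {x ε : ℝ} (hx : 2 ≤ x) (hε : 0 < ε) :
    (x ^ ε - 1)⁻¹ ≤ 2 / ε := by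
  have h : ε / 2 ≤ x ^ ε - 1 := by
    linarith [one_add_div_two_le_two_rpow hε.le, rpow_le_rpow zero_le_two hx hε.le]
  calc (x ^ ε - 1)⁻¹ ≤ (ε / 2)⁻¹ := inv_anti₀ (by positivity) h
    _ = 2 / ε := inv_div ε 2

lemma card_filter_rpow_lt_two_le {P : Finset ℕ} (hP : ∀ p ∈ P, 0 < p) {ε : ℝ} (hε : 0 < ε) :
    (#(P.filter fun p : ℕ ↦ (p : ℝ) ^ ε < 2) : ℝ) ≤ (2 : ℝ) ^ (1 / ε) := by
  have hsub : P.filter (fun p : ℕ ↦ (p : ℝ) ^ ε < 2) ⊆ Icc 1 ⌊(2 : ℝ) ^ (1 / ε)⌋₊ := by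
    intro p hp
    obtain ⟨hpP, hp2⟩ := mem_filter.mp hp
    refine mem_Icc.mpr ⟨hP p hpP, Nat.le_floor ?_⟩
    rw [one_div]
    exact ((lt_rpow_inv_iff_of_pos (Nat.cast_nonneg p) zero_le_two hε).mpr hp2).le
  calc (#(P.filter fun p : ℕ ↦ (p : ℝ) ^ ε < 2) : ℝ) ≤ ⌊(2 : ℝ) ^ (1 / ε)⌋₊ := by
        exact_mod_cast (card_le_card hsub).trans (Nat.card_Icc 1 _).le
    _ ≤ (2 : ℝ) ^ (1 / ε) := Nat.floor_le (by positivity)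

lemma prod_inv_rpow_sub_one_le {P : Finset ℕ} (hP : ∀ p ∈ P, 2 ≤ p) {ε : ℝ} (hε0 : 0 < ε)
    (hε2 : ε ≤ 2) : ∏ p ∈ P, ((p : ℝ) ^ ε - 1)⁻¹ ≤ (2 / ε) ^ ((2 : ℝ) ^ (1 / ε)) := by
  have hpos : ∀ p ∈ P, 0 ≤ ((p : ℝ) ^ ε - 1)⁻¹ := fun p hp ↦
    inv_nonneg.mpr <| sub_nonneg.mpr <|
      one_le_rpow (by exact_mod_cast (hP p hp).trans' one_le_two) hε0.le
  rw [← prod_filter_mul_prod_filter_not P fun p : ℕ ↦ (p : ℝ) ^ ε < 2]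
  set S := P.filter fun p : ℕ ↦ (p : ℝ) ^ ε < 2
  have hsmall : ∏ p ∈ S, ((p : ℝ) ^ ε - 1)⁻¹ ≤ ∏ _p ∈ S, 2 / ε :=
    prod_le_prod (fun p hp ↦ hpos p (mem_filter.mp hp).1) fun p hp ↦
      inv_rpow_sub_one_le_two_div (by exact_mod_cast hP p (mem_filter.mp hp).1) hε0
  have hlarge : ∏ p ∈ P.filter fun p : ℕ ↦ ¬(p : ℝ) ^ ε < 2, ((p : ℝ) ^ ε - 1)⁻¹ ≤ 1 :=
    prod_le_one (fun p hp ↦ hpos p (mem_filter.mp hp).1) fun p hp ↦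
      inv_le_one_of_one_le₀ (by linarith [not_lt.mp (mem_filter.mp hp).2])
  calc _ ≤ (∏ _p ∈ S, 2 / ε) * 1 :=
        mul_le_mul hsmall hlarge (prod_nonneg fun p hp ↦ hpos p (mem_filter.mp hp).1) (by positivity)
    _ = (2 / ε) ^ (#S : ℝ) := by rw [prod_const, mul_one, rpow_natCast]
    _ ≤ (2 / ε) ^ ((2 : ℝ) ^ (1 / ε)) :=
        rpow_le_rpow_of_exponent_le ((one_le_div hε0).mpr hε2)
          (card_filter_rpow_lt_two_le (fun p hp ↦ (hP p hp).trans_lt' two_pos) hε0)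

theorem card_rad_eq_le_general (ε : ℝ) (hε0 : 0 < ε) (hε1 : ε < 1) (N : ℕ) (r : ℕ) :
    (((Finset.Icc 1 N).filter (fun n => rad n = r)).card : ℝ)
      ≤ (2 / ε) ^ ((2 : ℝ) ^ (1 / ε)) * (N : ℝ) ^ ε := by
  set T := (Finset.Icc 1 N).filter (fun n => rad n = r)
  have hT : ∀ n ∈ T, n ≠ 0 ∧ n.primeFactors = r.primeFactors := fun n hn ↦ by
    obtain ⟨hnN, rfl⟩ := mem_filter.mp hn
    exact ⟨by linarith [(mem_Icc.mp hnN).1], (primeFactors_rad n).symm⟩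
  calc (#T : ℝ) ≤ (N : ℝ) ^ ε * ∑ n ∈ T, ((n : ℝ) ^ ε)⁻¹ :=
        card_le_rpow_mul_sum_inv_rpow (filter_subset _ _) hε0.le
    _ ≤ (N : ℝ) ^ ε * ∏ p ∈ r.primeFactors, ((p : ℝ) ^ ε - 1)⁻¹ := by
        gcongr
        exact sum_inv_rpow_le_prod_inv_rpow_sub_one
          (fun p hp ↦ (Nat.prime_of_mem_primeFactors hp).one_lt) hT hε0
    _ ≤ (N : ℝ) ^ ε * (2 / ε) ^ ((2 : ℝ) ^ (1 / ε)) := by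
        gcongr
        exact prod_inv_rpow_sub_one_le
          (fun p hp ↦ (Nat.prime_of_mem_primeFactors hp).two_le) hε0 (by linarith)
    _ = (2 / ε) ^ ((2 : ℝ) ^ (1 / ε)) * (N : ℝ) ^ ε := mul_comm _ _

theorem card_rad_eq_le (ε : ℝ) (hε0 : 0 < ε) (hε1 : ε < 1) (N : ℕ) (hN : 1 ≤ N) (r : ℕ) (hr : 0 < r) :
    (((Finset.Icc 1 N).filter (fun n => rad n = r)).card : ℝ)
      ≤ (2 / ε) ^ ((2 : ℝ) ^ (1 / ε)) * (N : ℝ) ^ ε :=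
  card_rad_eq_le_general ε hε0 hε1 N r
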